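/- The function θ ↦ 1/Q(2π|θ|) is integrable on ℝ³, and lim_{ε→0⁺} ε³·Σ_{k∈ℤ³} 1/(ε² + Q(2πε|k|)) = ∫_{ℝ³} 1/Q(2π|θ|) dθ. -/

import Mathlib

open Real MeasureTheory Filter

/-- Euclidean norm of a point of `ℤ³`. -/
noncomputable def znorm (k : Fin 3 → ℤ) : ℝ :=
  Real.sqrt (∑ i, ((k i : ℝ)) ^ 2)

noncomputable abbrev E3' := EuclideanSpace ℝ (Fin 3)

/-- The point `ε • k` of `ℝ³` associated to a lattice point. -/
noncomputable def vv (ε : ℝ) (k : Fin 3 → ℤ) : E3' :=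
  (WithLp.equiv 2 (Fin 3 → ℝ)).symm (fun i => ε * k i)

lemma vv_apply (ε : ℝ) (k : Fin 3 → ℤ) (i : Fin 3) : vv ε k i = ε * k i := rfl

lemma znorm_nonneg (k : Fin 3 → ℤ) : 0 ≤ znorm k := Real.sqrt_nonneg _

lemma norm_vv {ε : ℝ} (hε : 0 ≤ ε) (k : Fin 3 → ℤ) : ‖vv ε k‖ = ε * znorm k := by
  rw [EuclideanSpace.norm_eq, znorm]
  have : ∀ i : Fin 3, ‖vv ε k i‖ ^ 2 = ε ^ 2 * (k i : ℝ) ^ 2 := by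
    intro i; rw [vv_apply, norm_eq_abs, sq_abs]; ring
  simp only [this]
  rw [← Finset.mul_sum, Real.sqrt_mul (by positivity), Real.sqrt_sq hε]

lemma one_le_znorm {k : Fin 3 → ℤ} (hk : k ≠ 0) : 1 ≤ znorm k := by
  obtain ⟨i, hi⟩ : ∃ i, k i ≠ 0 := by
    by_contra h
    push_neg at h
    exact hk (funext h)
  have h1 : (1:ℝ) ≤ (k i : ℝ) ^ 2 := by
    have : (1:ℤ) ≤ (k i)^2 := by
      rcases lt_or_gt_of_ne hi with h | h <;> nlinarith
    exact_mod_cast this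
  have h2 : (1:ℝ) ≤ ∑ j, ((k j : ℝ)) ^ 2 := by
    calc (1:ℝ) ≤ (k i : ℝ)^2 := h1
      _ ≤ ∑ j, ((k j : ℝ)) ^ 2 :=
        Finset.single_le_sum (fun j _ => sq_nonneg ((k j : ℝ))) (Finset.mem_univ i)
  rw [znorm]
  exact Real.one_le_sqrt.2 h2

/-- The floor map sending a point of `ℝ³` to its lattice cell index. -/
noncomputable def fl (ε : ℝ) (θ : E3') : Fin 3 → ℤ := fun i => ⌊θ i / ε⌋

/-- The half-open cube of size `ε` based at `ε • k`. -/
def cell (ε : ℝ) (k : Fin 3 → ℤ) : Set E3' :=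
  (MeasurableEquiv.toLp 2 (Fin 3 → ℝ)).symm ⁻¹'
    (Set.univ.pi fun i => Set.Ico (ε * k i) (ε * (k i + 1)))

lemma mem_cell_iff {ε : ℝ} (hε : 0 < ε) (k : Fin 3 → ℤ) (θ : E3') :
    θ ∈ cell ε k ↔ fl ε θ = k := by
  have : θ ∈ cell ε k ↔ ∀ i, ε * k i ≤ θ i ∧ θ i < ε * (k i + 1) := by
    simp [cell, Set.mem_pi, Set.mem_Ico]
  rw [this, funext_iff]
  apply forall_congr'
  intro i
  rw [fl, Int.floor_eq_iff, le_div_iff₀ hε, div_lt_iff₀ hε]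
  constructor <;> rintro ⟨h1, h2⟩ <;> exact ⟨by nlinarith, by nlinarith⟩

lemma cell_measurable (ε : ℝ) (k : Fin 3 → ℤ) : MeasurableSet (cell ε k) :=
  (MeasurableEquiv.toLp 2 (Fin 3 → ℝ)).symm.measurable
    (MeasurableSet.univ_pi fun _ => measurableSet_Ico)

lemma cell_volume {ε : ℝ} (hε : 0 < ε) (k : Fin 3 → ℤ) :
    volume (cell ε k) = ENNReal.ofReal (ε ^ 3) := by
  rw [cell, (EuclideanSpace.volume_preserving_symm_measurableEquiv_toLp (Fin 3)).measure_preimage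
      ((MeasurableSet.univ_pi fun _ => measurableSet_Ico).nullMeasurableSet)]
  rw [volume_pi_pi]
  have : ∀ i : Fin 3, volume (Set.Ico (ε * k i) (ε * (k i + 1))) = ENNReal.ofReal ε := by
    intro i
    rw [Real.volume_Ico]
    congr 1
    ring
  simp only [this]
  rw [Finset.prod_const, ← ENNReal.ofReal_pow hε.le]
  simp

lemma cell_coord {ε : ℝ} {k : Fin 3 → ℤ} {θ : E3'} (h : θ ∈ cell ε k) :
    ∀ i, ε * k i ≤ θ i ∧ θ i < ε * (k i + 1) := by
  intro i
  simp only [cell, Set.mem_preimage, Set.mem_pi, Set.mem_univ, forall_true_left,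
    Set.mem_Ico] at h
  exact ⟨(h i).1, (h i).2⟩

lemma cell_dist {ε : ℝ} {k : Fin 3 → ℤ} {θ : E3'} (hε : 0 < ε) (h : θ ∈ cell ε k) :
    ‖θ - vv ε k‖ ≤ Real.sqrt 3 * ε := by
  rw [EuclideanSpace.norm_eq]
  have hb : ∀ i : Fin 3, ‖(θ - vv ε k) i‖ ^ 2 ≤ ε ^ 2 := by
    intro i
    have h1 := (cell_coord h i).1
    have h2 := (cell_coord h i).2
    have : (θ - vv ε k) i = θ i - ε * k i := by
      simp [vv_apply]
    rw [this, norm_eq_abs, sq_abs]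
    nlinarith
  calc Real.sqrt (∑ i, ‖(θ - vv ε k) i‖ ^ 2) ≤ Real.sqrt (∑ _i : Fin 3, ε ^ 2) :=
        Real.sqrt_le_sqrt (Finset.sum_le_sum fun i _ => hb i)
    _ = Real.sqrt 3 * ε := by
        rw [Finset.sum_const]
        simp only [Finset.card_univ, Fintype.card_fin, nsmul_eq_mul]
        rw [Real.sqrt_mul (by norm_num), Real.sqrt_sq hε.le]
        norm_num

lemma cell_norm_le {ε : ℝ} {k : Fin 3 → ℤ} {θ : E3'} (hε : 0 < ε) (hk : k ≠ 0)
    (h : θ ∈ cell ε k) : ‖θ‖ ≤ (1 + Real.sqrt 3) * (ε * znorm k) := by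
  have h1 : ‖θ‖ ≤ ‖vv ε k‖ + ‖θ - vv ε k‖ := by
    calc ‖θ‖ = ‖vv ε k + (θ - vv ε k)‖ := by rw [add_sub_cancel]
      _ ≤ _ := norm_add_le _ _
  have h2 := cell_dist hε h
  have h3 := norm_vv hε.le k
  have h4 := one_le_znorm hk
  have h5 : Real.sqrt 3 * ε ≤ Real.sqrt 3 * (ε * znorm k) := by
    have : (0:ℝ) ≤ Real.sqrt 3 := Real.sqrt_nonneg _
    nlinarith [mul_nonneg (mul_nonneg this hε.le) (sub_nonneg.2 h4)]
  nlinarith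

lemma cell_zero_norm {ε : ℝ} {θ : E3'} (hε : 0 < ε) (h : θ ∈ cell ε 0) :
    ‖θ‖ ≤ Real.sqrt 3 * ε := by
  have := cell_dist hε h
  have hv : vv ε 0 = 0 := by
    ext i
    simp [vv_apply]
  rwa [hv, sub_zero] at this

/-- Integrability of `‖θ‖⁻²` on balls in `ℝ³`. -/
lemma ball_int {R : ℝ} (hR : 0 < R) :
    IntegrableOn (fun θ : E3' => ‖θ‖ ^ (-2:ℝ)) (Metric.ball 0 R) := by
  have hmeas : Measurable (fun θ : E3' => ‖θ‖ ^ (-2:ℝ)) := measurable_norm.pow_const _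
  have hnn : ∀ θ : E3', 0 ≤ ‖θ‖ ^ (-2:ℝ) := fun θ => Real.rpow_nonneg (norm_nonneg _) _
  set μ : Measure E3' := volume.restrict (Metric.ball 0 R) with hμ
  constructor
  · exact hmeas.aestronglyMeasurable
  · rw [HasFiniteIntegral, lintegral_enorm_of_nonneg (fun θ => hnn θ)]
    rw [lintegral_eq_lintegral_meas_lt μ (ae_of_all _ hnn) hmeas.aemeasurable]
    set κ := volume (Metric.ball (0:E3') 1) with hκ
    have hκfin : κ < ⊤ := measure_ball_lt_top
    have hfr : Module.finrank ℝ E3' = 3 := by simp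
    have hbound : ∀ t ∈ Set.Ioi (0:ℝ), μ {θ : E3' | t < ‖θ‖ ^ (-2:ℝ)}
        ≤ min (ENNReal.ofReal (R^3) * κ) (ENNReal.ofReal ((Real.sqrt t⁻¹)^3) * κ) := by
      intro t ht
      rw [le_min_iff]
      constructor
      · calc μ {θ : E3' | t < ‖θ‖ ^ (-2:ℝ)} ≤ μ Set.univ := measure_mono (Set.subset_univ _)
          _ = volume (Metric.ball (0:E3') R) := by rw [hμ, Measure.restrict_apply_univ]
          _ = ENNReal.ofReal (R^3) * κ := by
              rw [Measure.addHaar_ball volume 0 hR.le, hfr]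
      · calc μ {θ : E3' | t < ‖θ‖ ^ (-2:ℝ)}
            ≤ volume {θ : E3' | t < ‖θ‖ ^ (-2:ℝ)} := Measure.restrict_le_self _
          _ ≤ volume (Metric.ball (0:E3') (Real.sqrt t⁻¹)) := by
              apply measure_mono
              intro θ hθ
              simp only [Set.mem_setOf_eq] at hθ
              have hθ0 : θ ≠ 0 := by
                rintro rfl
                simp only [norm_zero] at hθ
                rw [Real.zero_rpow (by norm_num)] at hθ
                exact absurd hθ (not_lt.2 (le_of_lt ht))
              have hn : 0 < ‖θ‖ := norm_pos_iff.2 hθ0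
              have h2 : ‖θ‖ ^ (-2:ℝ) = (‖θ‖^2)⁻¹ := by
                rw [Real.rpow_neg (norm_nonneg _), Real.rpow_two]
              rw [h2] at hθ
              have h3 : ‖θ‖^2 < t⁻¹ := by
                rw [lt_inv_comm₀ ht (by positivity)] at hθ
                exact hθ
              rw [mem_ball_zero_iff]
              exact (Real.lt_sqrt (norm_nonneg _)).2 h3
          _ = ENNReal.ofReal ((Real.sqrt t⁻¹)^3) * κ := by
              rw [Measure.addHaar_ball volume 0 (Real.sqrt_nonneg _), hfr]
    calc ∫⁻ t in Set.Ioi 0, μ {θ : E3' | t < ‖θ‖ ^ (-2:ℝ)}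
        ≤ ∫⁻ t in Set.Ioi 0,
            min (ENNReal.ofReal (R^3) * κ) (ENNReal.ofReal ((Real.sqrt t⁻¹)^3) * κ) :=
          setLIntegral_mono' measurableSet_Ioi hbound
      _ < ⊤ := by
          rw [← Set.Ioc_union_Ioi_eq_Ioi (zero_le_one (α := ℝ)),
            lintegral_union measurableSet_Ioi Set.Ioc_disjoint_Ioi_same]
          apply ENNReal.add_lt_top.2
          constructor
          · calc ∫⁻ t in Set.Ioc (0:ℝ) 1,
                min (ENNReal.ofReal (R^3) * κ) (ENNReal.ofReal ((Real.sqrt t⁻¹)^3) * κ)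
                ≤ ∫⁻ _ in Set.Ioc (0:ℝ) 1, ENNReal.ofReal (R^3) * κ :=
                  lintegral_mono (fun t => min_le_left _ _)
              _ = ENNReal.ofReal (R^3) * κ * volume (Set.Ioc (0:ℝ) 1) := by
                  rw [setLIntegral_const]
              _ < ⊤ := by
                  apply ENNReal.mul_lt_top (ENNReal.mul_lt_top ENNReal.ofReal_lt_top hκfin)
                  simp [Real.volume_Ioc]
          · calc ∫⁻ t in Set.Ioi (1:ℝ),
                min (ENNReal.ofReal (R^3) * κ) (ENNReal.ofReal ((Real.sqrt t⁻¹)^3) * κ)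
                ≤ ∫⁻ t in Set.Ioi (1:ℝ), ENNReal.ofReal ((Real.sqrt t⁻¹)^3) * κ :=
                  lintegral_mono (fun t => min_le_right _ _)
              _ = (∫⁻ t in Set.Ioi (1:ℝ), ENNReal.ofReal ((Real.sqrt t⁻¹)^3)) * κ := by
                  rw [lintegral_mul_const' _ _ hκfin.ne]
              _ < ⊤ := by
                  apply ENNReal.mul_lt_top _ hκfin
                  have hint : IntegrableOn (fun t : ℝ => (Real.sqrt t⁻¹)^3) (Set.Ioi 1) := by
                    apply (integrableOn_Ioi_rpow_of_lt (show (-3/2:ℝ) < -1 by norm_num)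
                      one_pos).congr_fun ?_ measurableSet_Ioi
                    intro t ht
                    have ht0 : (0:ℝ) < t := lt_trans one_pos ht
                    show t ^ (-3/2:ℝ) = Real.sqrt t⁻¹ ^ 3
                    rw [Real.sqrt_eq_rpow, ← Real.rpow_natCast (t⁻¹ ^ (1/2:ℝ)) 3,
                      ← Real.rpow_mul (by positivity), ← Real.rpow_neg_one t,
                      ← Real.rpow_mul ht0.le]
                    norm_num
                  exact hint.lintegral_lt_top

set_option maxHeartbeats 1000000 in
lemma core_bound (Q : ℝ → ℝ) (c η : ℝ) (hc : 0 < c) (hη : 0 < η)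
    (hQcont : ContinuousOn Q (Set.Ici 0))
    (hquad : ∀ Λ : ℝ, 0 < Λ → ∃ C : ℝ, 0 < C ∧ ∀ z ∈ Set.Icc (0:ℝ) Λ, |Q z - z ^ 2| ≤ C * z ^ 4)
    (hpos : ∀ z : ℝ, 0 < z → 0 < Q z)
    (hgrowth : ∀ z : ℝ, 1 ≤ z → c * z ^ (3 + η) ≤ Q z) :
    ∃ a : ℝ, 0 < a ∧ ∀ w z : ℝ, 0 < w → w ≤ z →
      a * w ^ 2 ≤ Q z ∧ a * w ^ (3 + η) ≤ Q z := by
  have rpow_two : ∀ x : ℝ, x ^ (2:ℝ) = x ^ 2 := fun x => by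
    rw [show (2:ℝ) = ((2:ℕ):ℝ) by norm_num, Real.rpow_natCast]
  obtain ⟨C, hC, hCb⟩ := hquad 1 one_pos
  set δ : ℝ := min 1 (Real.sqrt (1 / (2 * C))) with hδ_def
  have hδpos : 0 < δ := lt_min one_pos (Real.sqrt_pos.2 (by positivity))
  have hδ1 : δ ≤ 1 := min_le_left _ _
  have hδC : C * δ ^ 2 ≤ 1 / 2 := by
    have h1 : δ ≤ Real.sqrt (1 / (2 * C)) := min_le_right _ _
    have h2 : δ ^ 2 ≤ 1 / (2 * C) := by
      rw [← Real.sq_sqrt (by positivity : (0:ℝ) ≤ 1 / (2 * C))]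
      exact pow_le_pow_left₀ hδpos.le h1 2
    calc C * δ ^ 2 ≤ C * (1 / (2 * C)) := by nlinarith
      _ = 1 / 2 := by field_simp
  have hsmall : ∀ z : ℝ, 0 < z → z ≤ δ → (1/2) * z ^ 2 ≤ Q z := by
    intro z hz hzδ
    have habs := abs_le.1 (hCb z ⟨hz.le, hzδ.trans hδ1⟩)
    have h2z : z ^ 2 ≤ δ ^ 2 := pow_le_pow_left₀ hz.le hzδ 2
    have hz4 : C * z ^ 4 ≤ (1/2) * z ^ 2 := by
      nlinarith [mul_nonneg (mul_nonneg hC.le (sq_nonneg z)) (sub_nonneg.2 h2z),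
        mul_nonneg (sub_nonneg.2 hδC) (sq_nonneg z)]
    nlinarith [habs.1]
  obtain ⟨z₀, hz₀mem, hz₀min⟩ := (isCompact_Icc (a := δ) (b := 1)).exists_isMinOn
    ⟨δ, Set.left_mem_Icc.2 hδ1⟩
    (hQcont.mono (fun z hz => le_trans hδpos.le hz.1))
  have hm : 0 < Q z₀ := hpos z₀ (lt_of_lt_of_le hδpos hz₀mem.1)
  refine ⟨min (min (1/2) (Q z₀)) c, lt_min (lt_min (by norm_num) hm) hc, ?_⟩
  set a : ℝ := min (min (1/2) (Q z₀)) c with ha_def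
  have ha : 0 < a := lt_min (lt_min (by norm_num) hm) hc
  have ha_half : a ≤ 1/2 := le_trans (min_le_left _ _) (min_le_left _ _)
  have ha_m : a ≤ Q z₀ := le_trans (min_le_left _ _) (min_le_right _ _)
  have ha_c : a ≤ c := min_le_right _ _
  clear_value a
  clear ha_def hδ_def
  have haQ1 : ∀ z : ℝ, 0 < z → z ≤ 1 → a * z ^ 2 ≤ Q z := by
    intro z hz hz1
    by_cases hzδ : z ≤ δ
    · have := hsmall z hz hzδ
      nlinarith [sq_nonneg z]
    · push_neg at hzδ
      have h1 := isMinOn_iff.1 hz₀min z ⟨hzδ.le, hz1⟩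
      have hz2 : z ^ 2 ≤ 1 := by nlinarith
      nlinarith
  have haQ2 : ∀ z : ℝ, 1 ≤ z → a * z ^ (3 + η) ≤ Q z := by
    intro z hz
    have := hgrowth z hz
    have hzp : 0 ≤ z ^ (3 + η) := Real.rpow_nonneg (by linarith) _
    nlinarith
  intro w z hw hwz
  have hz : 0 < z := lt_of_lt_of_le hw hwz
  have hsq : w ^ 2 ≤ z ^ 2 := pow_le_pow_left₀ hw.le hwz 2
  by_cases hz1 : z ≤ 1
  · have h1 : a * z ^ 2 ≤ Q z := haQ1 z hz hz1
    have hw1 : w ≤ 1 := hwz.trans hz1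
    constructor
    · nlinarith
    · have hle : w ^ (3 + η) ≤ w ^ (2:ℝ) :=
        Real.rpow_le_rpow_of_exponent_ge hw hw1 (by linarith)
      rw [rpow_two] at hle
      nlinarith
  · push_neg at hz1
    have h2 : a * z ^ (3 + η) ≤ Q z := haQ2 z hz1.le
    have hz2 : z ^ (2:ℝ) ≤ z ^ (3 + η) :=
      Real.rpow_le_rpow_of_exponent_le hz1.le (by linarith)
    rw [rpow_two] at hz2
    constructor
    · nlinarith
    · by_cases hw1 : w ≤ 1
      · have hle : w ^ (3 + η) ≤ w ^ (2:ℝ) :=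
          Real.rpow_le_rpow_of_exponent_ge hw hw1 (by linarith)
        rw [rpow_two] at hle
        nlinarith
      · push_neg at hw1
        have hle : w ^ (3 + η) ≤ z ^ (3 + η) :=
          Real.rpow_le_rpow hw.le hwz (by linarith)
        nlinarith

set_option maxHeartbeats 1000000 in
/-- `θ ↦ 1/Q(2π|θ|)` is integrable on `ℝ³`, and
`ε³·Σ_{k∈ℤ³} 1/(ε² + Q(2πε|k|)) → ∫_{ℝ³} 1/Q(2π|θ|) dθ` as `ε → 0⁺`. -/
theorem stmt_8 (Q : ℝ → ℝ) (c η : ℝ) (hc : 0 < c) (hη : 0 < η)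
    (hQcont : ContinuousOn Q (Set.Ici 0))
    (hQ0 : Q 0 = 0)
    (hquad : ∀ Λ : ℝ, 0 < Λ → ∃ C : ℝ, 0 < C ∧ ∀ z ∈ Set.Icc (0:ℝ) Λ, |Q z - z ^ 2| ≤ C * z ^ 4)
    (hpos : ∀ z : ℝ, 0 < z → 0 < Q z)
    (hgrowth : ∀ z : ℝ, 1 ≤ z → c * z ^ (3 + η) ≤ Q z) :
    Integrable (fun θ : EuclideanSpace ℝ (Fin 3) => 1 / Q (2 * π * ‖θ‖)) ∧
    Tendsto (fun ε : ℝ => ε ^ 3 * ∑' k : Fin 3 → ℤ, 1 / (ε ^ 2 + Q (2 * π * ε * znorm k)))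
      (nhdsWithin 0 (Set.Ioi 0))
      (nhds (∫ θ : EuclideanSpace ℝ (Fin 3), 1 / Q (2 * π * ‖θ‖))) := by
  have hπ : (0:ℝ) < π := Real.pi_pos
  set s : ℝ := 2 * π / (1 + Real.sqrt 3) with hs_def
  have hsqrt3 : (0:ℝ) < Real.sqrt 3 := Real.sqrt_pos.2 (by norm_num)
  have h1s3 : (0:ℝ) < 1 + Real.sqrt 3 := by linarith
  have hs : 0 < s := by positivity
  have hs2π : s ≤ 2 * π := by
    rw [hs_def]
    exact div_le_self (by positivity) (by linarith)
  have hs3 : s * (1 + Real.sqrt 3) = 2 * π := by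
    rw [hs_def]; field_simp
  -- nonnegativity of Q on [0, ∞)
  have hQnonneg : ∀ z : ℝ, 0 ≤ z → 0 ≤ Q z := by
    intro z hz
    rcases eq_or_lt_of_le hz with h | h
    · rw [← h, hQ0]
    · exact (hpos z h).le
  -- rpow squared
  have rpow_two : ∀ x : ℝ, x ^ (2:ℝ) = x ^ 2 := fun x => by
    rw [show (2:ℝ) = ((2:ℕ):ℝ) by norm_num, Real.rpow_natCast]
  -- Step 1: a uniform lower bound for Q
  obtain ⟨a₀, ha₀, hcore₀⟩ := core_bound Q c η hc hη hQcont hquad hpos hgrowth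
  set a : ℝ := min a₀ (1 / (3 * s ^ 2)) with ha_def
  have ha : 0 < a := lt_min ha₀ (by positivity)
  have ha_s : 3 * a * s ^ 2 ≤ 1 := by
    have h1 : a ≤ 1 / (3 * s ^ 2) := min_le_right _ _
    rw [le_div_iff₀ (by positivity)] at h1
    nlinarith
  have hcore : ∀ w z : ℝ, 0 < w → w ≤ z →
      a * w ^ 2 ≤ Q z ∧ a * w ^ (3 + η) ≤ Q z := by
    intro w z hw hwz
    obtain ⟨h1, h2⟩ := hcore₀ w z hw hwz
    have haa : a ≤ a₀ := min_le_left _ _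
    exact ⟨(mul_le_mul_of_nonneg_right haa (sq_nonneg w)).trans h1,
      (mul_le_mul_of_nonneg_right haa (Real.rpow_nonneg hw.le _)).trans h2⟩
  clear_value a
  -- The dominating function G
  set G : E3' → ℝ := fun θ =>
    min ((1/a) * (s * ‖θ‖) ^ (-2:ℝ)) ((1/a) * (s * ‖θ‖) ^ (-(3 + η))) with hG_def
  have hGnonneg : ∀ θ : E3', 0 ≤ G θ := by
    intro θ
    apply le_min <;> positivity
  -- the key comparison
  have hkey : ∀ θ : E3', θ ≠ 0 → ∀ z : ℝ, s * ‖θ‖ ≤ z → 1 / Q z ≤ G θ := by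
    intro θ hθ z hz
    have hnθ : 0 < ‖θ‖ := norm_pos_iff.2 hθ
    have hw : 0 < s * ‖θ‖ := by positivity
    obtain ⟨h1, h2⟩ := hcore (s * ‖θ‖) z hw hz
    have hQz : 0 < Q z := hpos z (lt_of_lt_of_le hw hz)
    apply le_min
    · have := one_div_le_one_div_of_le (by positivity : 0 < a * (s * ‖θ‖) ^ 2) h1
      calc 1 / Q z ≤ 1 / (a * (s * ‖θ‖) ^ 2) := this
        _ = (1/a) * (s * ‖θ‖) ^ (-2:ℝ) := by
            rw [Real.rpow_neg hw.le, rpow_two]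
            field_simp
    · have hp : 0 < (s * ‖θ‖) ^ (3 + η) := Real.rpow_pos_of_pos hw _
      have := one_div_le_one_div_of_le (by positivity : 0 < a * (s * ‖θ‖) ^ (3 + η)) h2
      calc 1 / Q z ≤ 1 / (a * (s * ‖θ‖) ^ (3 + η)) := this
        _ = (1/a) * (s * ‖θ‖) ^ (-(3 + η)) := by
            rw [Real.rpow_neg hw.le]
            field_simp
  -- measurability of G
  have hGmeas : Measurable G := by
    apply Measurable.min
    · exact ((measurable_norm.const_mul s).pow_const (-2:ℝ)).const_mul (1/a)
    · exact ((measurable_norm.const_mul s).pow_const (-(3 + η))).const_mul (1/a)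
  -- integrability of G
  have hGint : Integrable G := by
    rw [← integrableOn_univ, ← Set.union_compl_self (Metric.ball (0:E3') 1)]
    apply IntegrableOn.union
    · -- near zero : compare with ‖θ‖⁻²
      apply Integrable.mono' (((ball_int one_pos).const_mul ((1/a) * s ^ (-2:ℝ))))
        (hGmeas.aestronglyMeasurable.restrict)
      apply ae_of_all
      intro θ
      rw [Real.norm_eq_abs, abs_of_nonneg (hGnonneg θ)]
      calc G θ ≤ (1/a) * (s * ‖θ‖) ^ (-2:ℝ) := min_le_left _ _
        _ = (1/a) * s ^ (-2:ℝ) * ‖θ‖ ^ (-2:ℝ) := by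
            rw [Real.mul_rpow hs.le (norm_nonneg _)]
            ring
    · -- away from zero : compare with (1 + ‖θ‖)^(-(3+η))
      have hfr : Module.finrank ℝ E3' = 3 := by simp
      have hint : Integrable (fun θ : E3' => (1 + ‖θ‖) ^ (-(3 + η))) := by
        apply integrable_one_add_norm
        rw [hfr]
        norm_num
        linarith
      apply Integrable.mono' ((hint.const_mul ((1/a) * (s/2) ^ (-(3 + η)))).integrableOn)
        (hGmeas.aestronglyMeasurable.restrict)
      rw [ae_restrict_iff' measurableSet_ball.compl]
      apply ae_of_all
      intro θ hθ
      have hθ1 : 1 ≤ ‖θ‖ := by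
        simp only [Set.mem_compl_iff, Metric.mem_ball, dist_zero_right, not_lt] at hθ
        exact hθ
      rw [Real.norm_eq_abs, abs_of_nonneg (hGnonneg θ)]
      have hb : (s/2) * (1 + ‖θ‖) ≤ s * ‖θ‖ := by nlinarith
      have hb0 : 0 < (s/2) * (1 + ‖θ‖) := by positivity
      calc G θ ≤ (1/a) * (s * ‖θ‖) ^ (-(3 + η)) := min_le_right _ _
        _ ≤ (1/a) * ((s/2) * (1 + ‖θ‖)) ^ (-(3 + η)) := by
            apply mul_le_mul_of_nonneg_left _ (by positivity)
            exact Real.rpow_le_rpow_of_nonpos hb0 hb (by linarith)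
        _ = (1/a) * (s/2) ^ (-(3 + η)) * (1 + ‖θ‖) ^ (-(3 + η)) := by
            rw [Real.mul_rpow (by positivity) (by positivity)]
            ring
  -- a.e. nonvanishing
  have hae : ∀ᵐ θ : E3' ∂volume, θ ≠ 0 := by
    rw [ae_iff]
    simp only [ne_eq, not_not]
    rw [show {θ : E3' | θ = 0} = {0} from rfl]
    exact measure_singleton 0
  -- integrability of the limit function
  have hfm : AEStronglyMeasurable (fun θ : E3' => 1 / Q (2 * π * ‖θ‖)) volume := by
    have hcont : ContinuousOn (fun θ : E3' => 1 / Q (2 * π * ‖θ‖)) {(0:E3')}ᶜ := by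
      intro θ hθ
      apply ContinuousAt.continuousWithinAt
      have hnθ : 0 < ‖θ‖ := norm_pos_iff.2 hθ
      have h2 : ContinuousAt (fun θ : E3' => 2 * π * ‖θ‖) θ :=
        (continuous_const.mul continuous_norm).continuousAt
      have hQat : ContinuousAt Q (2 * π * ‖θ‖) :=
        hQcont.continuousAt (Ici_mem_nhds (by positivity))
      exact continuousAt_const.div
        (ContinuousAt.comp (f := fun θ : E3' => 2 * π * ‖θ‖) hQat h2)
        ((hpos _ (by positivity)).ne')
    have h3 : AEStronglyMeasurable (fun θ : E3' => 1 / Q (2 * π * ‖θ‖))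
        (volume.restrict ({(0:E3')}ᶜ)) :=
      hcont.aestronglyMeasurable (measurableSet_singleton (0:E3')).compl
    rwa [MeasureTheory.restrict_compl_singleton] at h3
  have hf_le : ∀ θ : E3', θ ≠ 0 → ‖1 / Q (2 * π * ‖θ‖)‖ ≤ G θ := by
    intro θ hθ
    have hnθ : 0 < ‖θ‖ := norm_pos_iff.2 hθ
    have hQp : 0 < Q (2 * π * ‖θ‖) := hpos _ (by positivity)
    rw [Real.norm_eq_abs, abs_of_nonneg (by positivity)]
    apply hkey θ hθ
    nlinarith
  have hf_int : Integrable (fun θ : E3' => 1 / Q (2 * π * ‖θ‖)) := by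
    apply hGint.mono' hfm
    filter_upwards [hae] with θ hθ
    exact hf_le θ hθ
  refine ⟨hf_int, ?_⟩
  -- The step functions
  set l : Filter ℝ := nhdsWithin 0 (Set.Ioi 0) with hl_def
  set F : ℝ → E3' → ℝ := fun ε θ => 1 / (ε ^ 2 + Q (2 * π * ε * znorm (fl ε θ))) with hF_def
  have hFmeas : ∀ ε : ℝ, 0 < ε → AEStronglyMeasurable (F ε) volume := by
    intro ε hε
    have h1 : Measurable (fl ε) := by
      apply measurable_pi_lambda
      intro i
      exact Int.measurable_floor.comp
        (((measurable_pi_apply i).comp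
          (MeasurableEquiv.toLp 2 (Fin 3 → ℝ)).symm.measurable).div_const ε)
    exact ((measurable_of_countable
      (fun k : Fin 3 → ℤ => 1 / (ε ^ 2 + Q (2 * π * ε * znorm k)))).comp h1).aestronglyMeasurable
  -- eventual window
  set ε₀ : ℝ := (s * Real.sqrt 3)⁻¹ with hε₀_def
  have hε₀ : 0 < ε₀ := by positivity
  have hIoo : Set.Ioo (0:ℝ) ε₀ ∈ l := Ioo_mem_nhdsGT_of_mem ⟨le_refl 0, hε₀⟩
  -- argument nonnegativity
  have hargQ : ∀ (ε : ℝ), 0 < ε → ∀ k : Fin 3 → ℤ, 0 ≤ 2 * π * ε * znorm k := by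
    intro ε hε k
    have := znorm_nonneg k
    positivity
  -- the a.e. bound
  have h_bound : ∀ ε : ℝ, ε ∈ Set.Ioo (0:ℝ) ε₀ → ∀ᵐ θ : E3' ∂volume, ‖F ε θ‖ ≤ G θ := by
    intro ε hεI
    have hε : 0 < ε := hεI.1
    filter_upwards [hae] with θ hθ
    have hnθ : 0 < ‖θ‖ := norm_pos_iff.2 hθ
    have hcell : θ ∈ cell ε (fl ε θ) := (mem_cell_iff hε _ θ).2 rfl
    have hQa : 0 ≤ Q (2 * π * ε * znorm (fl ε θ)) := hQnonneg _ (hargQ ε hε _)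
    have hden : 0 < ε ^ 2 + Q (2 * π * ε * znorm (fl ε θ)) := by positivity
    have hFnn : 0 ≤ F ε θ := by
      rw [hF_def]
      positivity
    rw [Real.norm_eq_abs, abs_of_nonneg hFnn]
    by_cases hk : fl ε θ = 0
    · -- zero cell
      have hzn : znorm (fl ε θ) = 0 := by
        rw [hk, znorm]
        simp
      have hFeq : F ε θ = 1 / ε ^ 2 := by
        rw [hF_def]
        simp only [hzn, mul_zero, hQ0, add_zero]
      have hθb : ‖θ‖ ≤ Real.sqrt 3 * ε := cell_zero_norm hε (hk ▸ hcell)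
      have hsθ1 : s * ‖θ‖ ≤ 1 := by
        have h1 : s * ‖θ‖ ≤ s * (Real.sqrt 3 * ε) :=
          mul_le_mul_of_nonneg_left hθb hs.le
        have h2 : s * (Real.sqrt 3 * ε) ≤ s * Real.sqrt 3 * ε₀ := by
          rw [mul_assoc]
          apply mul_le_mul_of_nonneg_left _ (by positivity)
          exact mul_le_mul_of_nonneg_left hεI.2.le hsqrt3.le
        have h3 : s * Real.sqrt 3 * ε₀ = 1 := by
          rw [hε₀_def]
          field_simp
        linarith
      have hw : 0 < s * ‖θ‖ := by positivity
      have hcomp1 : F ε θ ≤ (1/a) * (s * ‖θ‖) ^ (-2:ℝ) := by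
        rw [hFeq]
        have hle : a * (s * ‖θ‖) ^ 2 ≤ ε ^ 2 := by
          have hsq : (s * ‖θ‖) ^ 2 ≤ (s * (Real.sqrt 3 * ε)) ^ 2 := by
            apply pow_le_pow_left₀ hw.le
            exact mul_le_mul_of_nonneg_left hθb hs.le
          have h3ε : (s * (Real.sqrt 3 * ε)) ^ 2 = 3 * s ^ 2 * ε ^ 2 := by
            have : Real.sqrt 3 ^ 2 = 3 := Real.sq_sqrt (by norm_num)
            nlinarith [this]
          nlinarith [sq_nonneg ε, mul_nonneg (mul_nonneg ha.le (sq_nonneg s)) (sq_nonneg ε)]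
        calc 1 / ε ^ 2 ≤ 1 / (a * (s * ‖θ‖) ^ 2) :=
              one_div_le_one_div_of_le (by positivity) hle
          _ = (1/a) * (s * ‖θ‖) ^ (-2:ℝ) := by
              rw [Real.rpow_neg hw.le, rpow_two]
              field_simp
      apply le_min hcomp1
      calc F ε θ ≤ (1/a) * (s * ‖θ‖) ^ (-2:ℝ) := hcomp1
        _ ≤ (1/a) * (s * ‖θ‖) ^ (-(3 + η)) := by
            apply mul_le_mul_of_nonneg_left _ (by positivity)
            exact Real.rpow_le_rpow_of_exponent_ge hw hsθ1 (by linarith)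
    · -- nonzero cell
      have hzk : 1 ≤ znorm (fl ε θ) := one_le_znorm hk
      have hz : s * ‖θ‖ ≤ 2 * π * ε * znorm (fl ε θ) := by
        have h1 : ‖θ‖ ≤ (1 + Real.sqrt 3) * (ε * znorm (fl ε θ)) := cell_norm_le hε hk hcell
        have h2 : s * ‖θ‖ ≤ s * ((1 + Real.sqrt 3) * (ε * znorm (fl ε θ))) :=
          mul_le_mul_of_nonneg_left h1 hs.le
        calc s * ‖θ‖ ≤ s * ((1 + Real.sqrt 3) * (ε * znorm (fl ε θ))) := h2
          _ = (s * (1 + Real.sqrt 3)) * (ε * znorm (fl ε θ)) := by ring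
          _ = 2 * π * ε * znorm (fl ε θ) := by rw [hs3]; ring
      have hw : 0 < s * ‖θ‖ := by positivity
      have hQz : 0 < Q (2 * π * ε * znorm (fl ε θ)) := hpos _ (lt_of_lt_of_le hw hz)
      calc F ε θ ≤ 1 / Q (2 * π * ε * znorm (fl ε θ)) := by
            rw [hF_def]
            apply one_div_le_one_div_of_le hQz
            nlinarith
        _ ≤ G θ := hkey θ hθ _ hz
  -- pointwise convergence
  have h_lim : ∀ᵐ θ : E3' ∂volume,
      Tendsto (fun ε : ℝ => F ε θ) l (nhds (1 / Q (2 * π * ‖θ‖))) := by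
    filter_upwards [hae] with θ hθ
    have hnθ : 0 < ‖θ‖ := norm_pos_iff.2 hθ
    have hnn : ∀ᶠ ε in l, ε ∈ Set.Ioi (0:ℝ) := self_mem_nhdsWithin
    -- the approximating lattice points converge
    have hd : ∀ᶠ ε in l, ‖vv ε (fl ε θ) - θ‖ ≤ Real.sqrt 3 * ε := by
      filter_upwards [hnn] with ε hε
      rw [norm_sub_rev]
      exact cell_dist hε ((mem_cell_iff hε _ θ).2 rfl)
    have h0 : Tendsto (fun ε : ℝ => Real.sqrt 3 * ε) l (nhds 0) := by
      have h : Tendsto (fun ε : ℝ => Real.sqrt 3 * ε) (nhds 0) (nhds (Real.sqrt 3 * 0)) :=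
        (continuous_const.mul continuous_id).tendsto 0
      rw [mul_zero] at h
      exact h.mono_left nhdsWithin_le_nhds
    have hsub : Tendsto (fun ε : ℝ => vv ε (fl ε θ) - θ) l (nhds 0) :=
      squeeze_zero_norm' hd h0
    have htend_u : Tendsto (fun ε : ℝ => vv ε (fl ε θ)) l (nhds θ) := by
      have := hsub.add_const θ
      simpa using this
    have htn : Tendsto (fun ε : ℝ => 2 * π * ‖vv ε (fl ε θ)‖) l (nhds (2 * π * ‖θ‖)) :=
      ((continuous_norm.tendsto θ).comp htend_u).const_mul (2 * π)
    have harg_eq : (fun ε : ℝ => 2 * π * ‖vv ε (fl ε θ)‖)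
        =ᶠ[l] (fun ε : ℝ => 2 * π * ε * znorm (fl ε θ)) := by
      filter_upwards [hnn] with ε hε
      rw [norm_vv (le_of_lt hε)]
      ring
    have harg : Tendsto (fun ε : ℝ => 2 * π * ε * znorm (fl ε θ)) l (nhds (2 * π * ‖θ‖)) :=
      htn.congr' harg_eq
    have hin : ∀ᶠ ε in l, 2 * π * ε * znorm (fl ε θ) ∈ Set.Ici (0:ℝ) := by
      filter_upwards [hnn] with ε hε
      exact hargQ ε hε _
    have hQc : ContinuousWithinAt Q (Set.Ici 0) (2 * π * ‖θ‖) :=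
      hQcont _ (Set.mem_Ici.2 (by positivity))
    have hQarg : Tendsto (fun ε : ℝ => Q (2 * π * ε * znorm (fl ε θ))) l
        (nhds (Q (2 * π * ‖θ‖))) :=
      hQc.tendsto.comp (tendsto_nhdsWithin_of_tendsto_nhds_of_eventually_within _ harg hin)
    have hsq : Tendsto (fun ε : ℝ => ε ^ 2) l (nhds 0) := by
      have h := (continuous_pow 2).tendsto (0:ℝ)
      simp only [ne_eq, OfNat.ofNat_ne_zero, not_false_eq_true, zero_pow] at h
      exact h.mono_left nhdsWithin_le_nhds
    have hden : Tendsto (fun ε : ℝ => ε ^ 2 + Q (2 * π * ε * znorm (fl ε θ))) l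
        (nhds (0 + Q (2 * π * ‖θ‖))) := hsq.add hQarg
    have hQp : 0 < Q (2 * π * ‖θ‖) := hpos _ (by positivity)
    have := (tendsto_const_nhds (x := (1:ℝ)) (f := l)).div hden
      (by rw [zero_add]; exact hQp.ne')
    rw [zero_add] at this
    exact this
  -- dominated convergence
  have hDCT := tendsto_integral_filter_of_dominated_convergence (μ := volume)
    (F := F) (f := fun θ : E3' => 1 / Q (2 * π * ‖θ‖)) (bound := G)
    (by
      filter_upwards [hIoo] with ε hε
      exact hFmeas ε hε.1)
    (by
      filter_upwards [hIoo] with ε hε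
      exact h_bound ε hε)
    hGint h_lim
  -- identify the integral of `F ε` with the Riemann sum
  have hEq : (fun ε : ℝ => ∫ θ : E3', F ε θ)
      =ᶠ[l] (fun ε : ℝ => ε ^ 3 * ∑' k : Fin 3 → ℤ, 1 / (ε ^ 2 + Q (2 * π * ε * znorm k))) := by
    filter_upwards [hIoo] with ε hεI
    have hε : 0 < ε := hεI.1
    have hFint : Integrable (F ε) := hGint.mono' (hFmeas ε hε) (h_bound ε hεI)
    have hdisj : Pairwise (Function.onFun Disjoint (cell ε)) := by
      intro k k' hkk'
      rw [Function.onFun, Set.disjoint_left]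
      intro θ hkθ hk'θ
      apply hkk'
      rw [← (mem_cell_iff hε k θ).1 hkθ, ← (mem_cell_iff hε k' θ).1 hk'θ]
    have hUnion : (⋃ k : Fin 3 → ℤ, cell ε k) = Set.univ :=
      Set.eq_univ_of_forall fun θ => Set.mem_iUnion.2 ⟨fl ε θ, (mem_cell_iff hε _ θ).2 rfl⟩
    calc ∫ θ : E3', F ε θ = ∫ θ in (⋃ k : Fin 3 → ℤ, cell ε k), F ε θ := by
          rw [hUnion, setIntegral_univ]
      _ = ∑' k : Fin 3 → ℤ, ∫ θ in cell ε k, F ε θ :=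
          integral_iUnion (fun k => cell_measurable ε k) hdisj
            (hUnion ▸ hFint.integrableOn)
      _ = ∑' k : Fin 3 → ℤ, ε ^ 3 * (1 / (ε ^ 2 + Q (2 * π * ε * znorm k))) := by
          apply tsum_congr
          intro k
          have hconst : ∀ θ ∈ cell ε k, F ε θ = 1 / (ε ^ 2 + Q (2 * π * ε * znorm k)) := by
            intro θ hθ
            rw [hF_def]
            simp only
            rw [(mem_cell_iff hε k θ).1 hθ]
          rw [setIntegral_congr_fun (cell_measurable ε k) hconst, setIntegral_const,
            measureReal_def, cell_volume hε k, ENNReal.toReal_ofReal (by positivity), smul_eq_mul]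
      _ = ε ^ 3 * ∑' k : Fin 3 → ℤ, 1 / (ε ^ 2 + Q (2 * π * ε * znorm k)) := tsum_mul_left
  exact hDCT.congr' hEq
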